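/- arXiv:1901.07349 — 7 statements merged into one kernel-verified Lean document; each statement's English description precedes it below -/
import Mathlib

section
/- For all s, t ∈ [0,π], the Minkowski product of the spherical caps centered at 1 satisfies: U(1,s) ⊗ U(1,t) = U(1, s+t) if s + t ∈ [0,π], and U(1,s) ⊗ U(1,t) = S³ if s + t ∈ [π, 2π]. -/
open Real Set

noncomputable section

abbrev H : Type := Quaternion ℝ

/-- Inner product on ℍ regarded as ℝ⁴ : ⟨A,B⟩ = re(A B*). -/
def qInner (a b : H) : ℝ := (a * star b).re

/-- The set of unit quaternions, the 3-sphere S³. -/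
def S3 : Set H := {u : H | ‖u‖ = 1}

/-- Spherical cap U(U₀,t) = {U ∈ S³ : ⟨U,U₀⟩ ≥ cos t}. -/
def cap (u₀ : H) (t : ℝ) : Set H := {u : H | u ∈ S3 ∧ qInner u u₀ ≥ Real.cos t}

/-- Minkowski product of two quaternion sets. -/
def mprod (U V : Set H) : Set H := Set.image2 (· * ·) U V

/-- exp(s n) = cos s + (sin s) n for purely imaginary unit n. -/
def qexp (s : ℝ) (n : H) : H := (Real.cos s : H) + Real.sin s • n

/-- The boundary (frontier) of A in the subspace topology of S³:
for A ⊆ S³ this coincides with the frontier taken in the topological subspace S³. -/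
def bdryIn (A : Set H) : Set H := S3 ∩ closure A ∩ closure (S3 \ A)

/-! For unit quaternions, `⟨u, 1⟩ ≥ cos s` says that the angle between `u` and `1` is at most `s`,
so `U(1, s)` is the geodesic ball of radius `s` about `1` in `S³`. Left multiplication by a unit
quaternion is an isometry, hence `∠(uv, 1) ≤ ∠(uv, u) + ∠(u, 1) = ∠(v, 1) + ∠(u, 1)`. Conversely a
unit `w` at angle `θ` from `1` is `cos θ + sin θ • n = exp (θ n)` for a pure unit `n`, and splitting
`θ = a + b` with `a ≤ s`, `b ≤ t` gives `w = exp (a n) * exp (b n)`. So the product is the ball of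
radius `s + t`, which is all of `S³` once `s + t ≥ π`. -/

open InnerProductGeometry

lemma qInner_eq_cos_angle {u v : H} (hu : ‖u‖ = 1) (hv : ‖v‖ = 1) :
    qInner u v = Real.cos (angle u v) := by
  rw [qInner, ← Quaternion.inner_def, inner_eq_cos_angle_of_norm_eq_one hu hv]

lemma mem_cap_iff {u₀ : H} (hu₀ : ‖u₀‖ = 1) {s : ℝ} (hs : s ∈ Icc 0 π) {u : H} :
    u ∈ cap u₀ s ↔ u ∈ S3 ∧ angle u u₀ ≤ s := by
  refine and_congr_right fun hu => ?_
  rw [ge_iff_le, qInner_eq_cos_angle hu hu₀]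
  exact strictAntiOn_cos.le_iff_ge hs ⟨angle_nonneg _ _, angle_le_pi _ _⟩

lemma angle_one_eq_arccos {u : H} (hu : ‖u‖ = 1) : angle u 1 = Real.arccos u.re := by
  simp [angle, hu, Quaternion.inner_def]

lemma mul_mem_S3 {u v : H} (hu : u ∈ S3) (hv : v ∈ S3) : u * v ∈ S3 := by
  simp_all [S3, norm_mul]

lemma angle_mul_left {u : H} (hu : ‖u‖ = 1) (v w : H) : angle (u * v) (u * w) = angle v w :=
  LinearIsometry.angle_map ⟨LinearMap.mulLeft ℝ u, fun x => by simp [norm_mul, hu]⟩ v w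

lemma angle_mul_one_le {u : H} (hu : ‖u‖ = 1) (v : H) :
    angle (u * v) 1 ≤ angle u 1 + angle v 1 :=
  calc angle (u * v) 1 ≤ angle (u * v) u + angle u 1 := angle_le_angle_add_angle _ _ _
    _ = angle u 1 + angle v 1 := by rw [← angle_mul_left hu v 1, mul_one, add_comm]

lemma norm_im_sq (q : H) : ‖q.im‖ ^ 2 = ‖q‖ ^ 2 - q.re ^ 2 := by
  simp only [sq, ← Quaternion.normSq_eq_norm_mul_self, Quaternion.normSq_def', Quaternion.re_im,
    Quaternion.imI_im, Quaternion.imJ_im, Quaternion.imK_im]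
  ring

lemma norm_eq_one_of_normSq_eq_one {q : H} (h : Quaternion.normSq q = 1) : ‖q‖ = 1 := by
  rwa [Quaternion.normSq_eq_norm_mul_self, ← sq,
    pow_eq_one_iff_of_nonneg (norm_nonneg _) two_ne_zero] at h

lemma exists_pure_unit_smul_eq_im (q : H) : ∃ n : H, n.re = 0 ∧ ‖n‖ = 1 ∧ q.im = ‖q.im‖ • n := by
  by_cases him : q.im = 0
  · refine ⟨Quaternion.coeComplex Complex.I, by simp, norm_eq_one_of_normSq_eq_one ?_,
      by simp [him]⟩
    simp [Quaternion.normSq_def']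
  · have hnorm : ‖q.im‖ ≠ 0 := norm_ne_zero_iff.2 him
    refine ⟨‖q.im‖⁻¹ • q.im, by simp, ?_, ?_⟩
    · rw [norm_smul, norm_inv, norm_norm, inv_mul_cancel₀ hnorm]
    · rw [smul_smul, mul_inv_cancel₀ hnorm, one_smul]

lemma mul_self_eq_neg_one {n : H} (hre : n.re = 0) (hn : ‖n‖ = 1) : n * n = -1 := by
  rw [← sq, Quaternion.sq_eq_neg_normSq.2 hre, Quaternion.normSq_eq_norm_mul_self, hn]
  simp

lemma re_qexp (a : ℝ) {n : H} (hre : n.re = 0) : (qexp a n).re = Real.cos a := by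
  simp [qexp, hre]

lemma norm_qexp (a : ℝ) {n : H} (hre : n.re = 0) (hn : ‖n‖ = 1) : ‖qexp a n‖ = 1 := by
  refine norm_eq_one_of_normSq_eq_one ?_
  rw [qexp, Quaternion.normSq_add]
  simp [Quaternion.normSq_eq_norm_mul_self, norm_smul, hn, hre, ← sq]

lemma qexp_mul_qexp (a b : ℝ) {n : H} (hn : n * n = -1) :
    qexp a n * qexp b n = qexp (a + b) n := by
  have coe_eq_smul_one (r : ℝ) : (r : H) = r • (1 : H) := by
    rw [← Quaternion.coe_one, Quaternion.smul_coe, mul_one]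
  simp only [qexp, coe_eq_smul_one, Real.cos_add, Real.sin_add, add_mul, mul_add,
    smul_mul_smul_comm, hn, one_mul, mul_one]
  module

lemma exists_eq_qexp_angle {w : H} (hw : ‖w‖ = 1) :
    ∃ n : H, n.re = 0 ∧ ‖n‖ = 1 ∧ w = qexp (angle w 1) n := by
  obtain ⟨n, hre, hn, him⟩ := exists_pure_unit_smul_eq_im w
  have hre_sq : w.re ^ 2 ≤ 1 := by nlinarith [norm_im_sq w, sq_nonneg ‖w.im‖]
  have hcos : Real.cos (angle w 1) = w.re := by
    rw [angle_one_eq_arccos hw]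
    exact Real.cos_arccos (by nlinarith) (by nlinarith)
  have hsin : Real.sin (angle w 1) = ‖w.im‖ := by
    have him_sq : 1 - w.re ^ 2 = ‖w.im‖ ^ 2 := by rw [norm_im_sq, hw, one_pow]
    rw [angle_one_eq_arccos hw, Real.sin_arccos, him_sq, Real.sqrt_sq (norm_nonneg _)]
  exact ⟨n, hre, hn, by rw [qexp, hcos, hsin, ← him, Quaternion.re_add_im]⟩

lemma qexp_mem_cap_one {a r : ℝ} (ha : 0 ≤ a) (har : a ≤ r) (hr : r ∈ Icc 0 π) {n : H}
    (hre : n.re = 0) (hn : ‖n‖ = 1) : qexp a n ∈ cap 1 r := by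
  refine (mem_cap_iff norm_one hr).2 ⟨norm_qexp a hre hn, ?_⟩
  rwa [angle_one_eq_arccos (norm_qexp a hre hn), re_qexp a hre,
    Real.arccos_cos ha (har.trans hr.2)]

lemma mem_mprod_cap_one {s t : ℝ} (hs : s ∈ Icc 0 π) (ht : t ∈ Icc 0 π) {w : H} (hw : w ∈ S3)
    (hwst : angle w 1 ≤ s + t) : w ∈ mprod (cap 1 s) (cap 1 t) := by
  obtain ⟨n, hre, hn, hw_eq⟩ := exists_eq_qexp_angle hw
  set θ := angle w 1
  refine ⟨qexp (min θ s) n,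
    qexp_mem_cap_one (le_min (angle_nonneg _ _) hs.1) (min_le_right _ _) hs hre hn,
    qexp (θ - min θ s) n, qexp_mem_cap_one (sub_nonneg.2 (min_le_left _ _)) ?_ ht hre hn, ?_⟩
  · grind
  · change qexp _ n * qexp _ n = w
    rw [qexp_mul_qexp _ _ (mul_self_eq_neg_one hre hn), add_sub_cancel, ← hw_eq]

lemma mprod_cap_one {s t : ℝ} (hs : s ∈ Icc 0 π) (ht : t ∈ Icc 0 π) :
    mprod (cap 1 s) (cap 1 t) = {w | w ∈ S3 ∧ angle w 1 ≤ s + t} := by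
  ext w
  refine ⟨?_, fun ⟨hw, hwst⟩ => mem_mprod_cap_one hs ht hw hwst⟩
  rintro ⟨u, hu, v, hv, rfl⟩
  rw [mem_cap_iff norm_one hs] at hu
  rw [mem_cap_iff norm_one ht] at hv
  exact ⟨mul_mem_S3 hu.1 hv.1, (angle_mul_one_le hu.1 v).trans (add_le_add hu.2 hv.2)⟩

theorem stmt5 (s t : ℝ) (hs : s ∈ Set.Icc 0 π) (ht : t ∈ Set.Icc 0 π) :
    (s + t ∈ Set.Icc 0 π → mprod (cap 1 s) (cap 1 t) = cap 1 (s + t)) ∧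
      (s + t ∈ Set.Icc π (2 * π) → mprod (cap 1 s) (cap 1 t) = S3) := by
  rw [mprod_cap_one hs ht]
  refine ⟨fun hst => ?_, fun hst => ?_⟩
  · ext w
    exact (mem_cap_iff norm_one hst).symm
  · ext w
    exact and_iff_left ((angle_le_pi w 1).trans hst.1)
end
end

section
/- (Closure of spherical caps under Minkowski products.) For all unit quaternions U₀, V₀ ∈ S³ and all s, t ∈ [0,π]: U(U₀,s) ⊗ U(V₀,t) = U(U₀V₀, s+t) if s + t ∈ [0,π], and U(U₀,s) ⊗ U(V₀,t) = S³ if s + t ∈ [π, 2π]. -/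
open Real Set

noncomputable section

/-! ### Auxiliary lemmas -/

lemma unitSq {a : H} (ha : ‖a‖ = 1) :
    a.re ^ 2 + a.imI ^ 2 + a.imJ ^ 2 + a.imK ^ 2 = 1 := by
  have h := (Quaternion.normSq_def' a).symm.trans (Quaternion.normSq_eq_norm_mul_self a)
  rw [ha] at h
  linarith

lemma norm_one_of_sq {a : H}
    (h : a.re ^ 2 + a.imI ^ 2 + a.imJ ^ 2 + a.imK ^ 2 = 1) : ‖a‖ = 1 := by
  have h2 : ‖a‖ * ‖a‖ = 1 := by
    rw [← Quaternion.normSq_eq_norm_mul_self, Quaternion.normSq_def', h]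
  have := norm_nonneg a
  nlinarith

lemma re_le_one {a : H} (ha : ‖a‖ = 1) : a.re ≤ 1 := by
  have := unitSq ha
  nlinarith [sq_nonneg a.imI, sq_nonneg a.imJ, sq_nonneg a.imK, sq_nonneg (a.re - 1)]

lemma neg_one_le_re {a : H} (ha : ‖a‖ = 1) : -1 ≤ a.re := by
  have := unitSq ha
  nlinarith [sq_nonneg a.imI, sq_nonneg a.imJ, sq_nonneg a.imK, sq_nonneg (a.re + 1)]

lemma re_comm (x y : H) : (x * y).re = (y * x).re := by
  rw [Quaternion.re_mul, Quaternion.re_mul]; ring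

lemma arccos_le_of_cos_le {x s : ℝ} (hs0 : 0 ≤ s) (hsπ : s ≤ π)
    (h : Real.cos s ≤ x) (hx1 : x ≤ 1) : Real.arccos x ≤ s := by
  by_contra hc
  push_neg at hc
  have h2 := Real.cos_lt_cos_of_nonneg_of_le_pi hs0 (Real.arccos_le_pi x) hc
  rw [Real.cos_arccos (by linarith [Real.neg_one_le_cos s]) hx1] at h2
  linarith

/-- A unit quaternion with angle `θ` and imaginary axis `(n1, n2, n3)`. -/
def qmk (θ n1 n2 n3 : ℝ) : H := ⟨Real.cos θ, Real.sin θ * n1, Real.sin θ * n2, Real.sin θ * n3⟩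

@[simp] lemma qmk_re (θ n1 n2 n3 : ℝ) : (qmk θ n1 n2 n3).re = Real.cos θ := rfl
@[simp] lemma qmk_imI (θ n1 n2 n3 : ℝ) : (qmk θ n1 n2 n3).imI = Real.sin θ * n1 := rfl
@[simp] lemma qmk_imJ (θ n1 n2 n3 : ℝ) : (qmk θ n1 n2 n3).imJ = Real.sin θ * n2 := rfl
@[simp] lemma qmk_imK (θ n1 n2 n3 : ℝ) : (qmk θ n1 n2 n3).imK = Real.sin θ * n3 := rfl

lemma qmk_norm (θ : ℝ) {n1 n2 n3 : ℝ} (hn : n1 ^ 2 + n2 ^ 2 + n3 ^ 2 = 1) :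
    ‖qmk θ n1 n2 n3‖ = 1 := by
  apply norm_one_of_sq
  rw [qmk_re, qmk_imI, qmk_imJ, qmk_imK]
  nlinarith [Real.sin_sq_add_cos_sq θ]

lemma qmk_mul (α β : ℝ) {n1 n2 n3 : ℝ} (hn : n1 ^ 2 + n2 ^ 2 + n3 ^ 2 = 1) :
    qmk α n1 n2 n3 * qmk β n1 n2 n3 = qmk (α + β) n1 n2 n3 := by
  apply Quaternion.ext
  · rw [Quaternion.re_mul]
    simp only [qmk_re, qmk_imI, qmk_imJ, qmk_imK]
    rw [Real.cos_add]
    ring_nf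
    linear_combination (-(Real.sin β * Real.sin α)) * hn
  · rw [Quaternion.imI_mul]
    simp only [qmk_re, qmk_imI, qmk_imJ, qmk_imK]
    rw [Real.sin_add]
    ring
  · rw [Quaternion.imJ_mul]
    simp only [qmk_re, qmk_imI, qmk_imJ, qmk_imK]
    rw [Real.sin_add]
    ring
  · rw [Quaternion.imK_mul]
    simp only [qmk_re, qmk_imI, qmk_imJ, qmk_imK]
    rw [Real.sin_add]
    ring

/-- Forward inequality: product of unit quaternions with bounded angles. -/
lemma fwd {s t : ℝ} (hs : s ∈ Set.Icc 0 π) (ht : t ∈ Set.Icc 0 π)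
    (hst : s + t ≤ π) {a b : H} (ha : ‖a‖ = 1) (hb : ‖b‖ = 1)
    (hra : Real.cos s ≤ a.re) (hrb : Real.cos t ≤ b.re) :
    Real.cos (s + t) ≤ (a * b).re := by
  set α := Real.arccos a.re with hα
  set β := Real.arccos b.re with hβ
  have hca : Real.cos α = a.re := Real.cos_arccos (neg_one_le_re ha) (re_le_one ha)
  have hcb : Real.cos β = b.re := Real.cos_arccos (neg_one_le_re hb) (re_le_one hb)
  have hαs : α ≤ s := arccos_le_of_cos_le hs.1 hs.2 hra (re_le_one ha)
  have hβt : β ≤ t := arccos_le_of_cos_le ht.1 ht.2 hrb (re_le_one hb)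
  have hA : 1 - a.re ^ 2 = a.imI ^ 2 + a.imJ ^ 2 + a.imK ^ 2 := by
    linarith [unitSq ha]
  have hB : 1 - b.re ^ 2 = b.imI ^ 2 + b.imJ ^ 2 + b.imK ^ 2 := by
    linarith [unitSq hb]
  have hsa : Real.sin α = Real.sqrt (a.imI ^ 2 + a.imJ ^ 2 + a.imK ^ 2) := by
    rw [hα, Real.sin_arccos, hA]
  have hsb : Real.sin β = Real.sqrt (b.imI ^ 2 + b.imJ ^ 2 + b.imK ^ 2) := by
    rw [hβ, Real.sin_arccos, hB]
  set S := a.imI * b.imI + a.imJ * b.imJ + a.imK * b.imK with hS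
  have hA0 : (0:ℝ) ≤ a.imI ^ 2 + a.imJ ^ 2 + a.imK ^ 2 := by positivity
  have hB0 : (0:ℝ) ≤ b.imI ^ 2 + b.imJ ^ 2 + b.imK ^ 2 := by positivity
  have hCS : S ^ 2 ≤ (a.imI ^ 2 + a.imJ ^ 2 + a.imK ^ 2) *
      (b.imI ^ 2 + b.imJ ^ 2 + b.imK ^ 2) := by
    rw [hS]
    nlinarith [sq_nonneg (a.imI * b.imJ - a.imJ * b.imI),
      sq_nonneg (a.imI * b.imK - a.imK * b.imI),
      sq_nonneg (a.imJ * b.imK - a.imK * b.imJ)]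
  have hSle : S ≤ Real.sin α * Real.sin β := by
    calc S ≤ |S| := le_abs_self S
    _ = Real.sqrt (S ^ 2) := (Real.sqrt_sq_eq_abs S).symm
    _ ≤ Real.sqrt ((a.imI ^ 2 + a.imJ ^ 2 + a.imK ^ 2) *
        (b.imI ^ 2 + b.imJ ^ 2 + b.imK ^ 2)) := Real.sqrt_le_sqrt hCS
    _ = Real.sin α * Real.sin β := by rw [hsa, hsb, Real.sqrt_mul hA0]
  have hkey : Real.cos (α + β) ≤ (a * b).re := by
    rw [Real.cos_add, Quaternion.re_mul, hca, hcb]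
    have : a.re * b.re - (a.imI * b.imI + a.imJ * b.imJ + a.imK * b.imK)
        ≥ a.re * b.re - Real.sin α * Real.sin β := by linarith
    linarith
  have hmono : Real.cos (s + t) ≤ Real.cos (α + β) :=
    Real.cos_le_cos_of_nonneg_of_le_pi
      (add_nonneg (Real.arccos_nonneg _) (Real.arccos_nonneg _))
      hst (add_le_add hαs hβt)
  linarith

/-- Reverse construction: any unit quaternion whose angle is at most `s + t`
factors as a product of unit quaternions with angles at most `s` and `t`. -/
lemma rev {s t : ℝ} (hs : s ∈ Set.Icc 0 π) (ht : t ∈ Set.Icc 0 π)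
    {c : H} (hc : ‖c‖ = 1) (hγ : Real.arccos c.re ≤ s + t) :
    ∃ a b : H, ‖a‖ = 1 ∧ ‖b‖ = 1 ∧ Real.cos s ≤ a.re ∧ Real.cos t ≤ b.re ∧
      a * b = c := by
  set γ := Real.arccos c.re with hγdef
  have hγ0 : 0 ≤ γ := Real.arccos_nonneg _
  have hγπ : γ ≤ π := Real.arccos_le_pi _
  have hcγ : Real.cos γ = c.re := Real.cos_arccos (neg_one_le_re hc) (re_le_one hc)
  set r := Real.sqrt (c.imI ^ 2 + c.imJ ^ 2 + c.imK ^ 2) with hr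
  have hsum0 : (0:ℝ) ≤ c.imI ^ 2 + c.imJ ^ 2 + c.imK ^ 2 := by positivity
  have hsγ : Real.sin γ = r := by
    rw [hγdef, Real.sin_arccos, hr]
    congr 1
    linarith [unitSq hc]
  obtain ⟨n1, n2, n3, hn, hi, hj, hk⟩ :
      ∃ n1 n2 n3 : ℝ, n1 ^ 2 + n2 ^ 2 + n3 ^ 2 = 1 ∧
        r * n1 = c.imI ∧ r * n2 = c.imJ ∧ r * n3 = c.imK := by
    rcases eq_or_ne r 0 with h0 | h0
    · have hsum : c.imI ^ 2 + c.imJ ^ 2 + c.imK ^ 2 = 0 := by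
        have := Real.sqrt_eq_zero hsum0 |>.mp h0
        exact this
      have h1 : c.imI = 0 := by nlinarith [sq_nonneg c.imI, sq_nonneg c.imJ, sq_nonneg c.imK]
      have h2 : c.imJ = 0 := by nlinarith [sq_nonneg c.imI, sq_nonneg c.imJ, sq_nonneg c.imK]
      have h3 : c.imK = 0 := by nlinarith [sq_nonneg c.imI, sq_nonneg c.imJ, sq_nonneg c.imK]
      exact ⟨1, 0, 0, by norm_num, by simp [h0, h1], by simp [h0, h2], by simp [h0, h3]⟩
    · have hr2 : r ^ 2 = c.imI ^ 2 + c.imJ ^ 2 + c.imK ^ 2 := Real.sq_sqrt hsum0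
      refine ⟨c.imI / r, c.imJ / r, c.imK / r, ?_, ?_, ?_, ?_⟩
      · field_simp
        linarith [hr2]
      · field_simp
      · field_simp
      · field_simp
  set α := min γ s with hαdef
  set β := γ - α with hβdef
  have hα0 : 0 ≤ α := le_min hγ0 hs.1
  have hαs : α ≤ s := min_le_right _ _
  have hαγ : α ≤ γ := min_le_left _ _
  have hβ0 : 0 ≤ β := by simp only [hβdef]; linarith
  have hβt : β ≤ t := by
    rcases le_total γ s with h | h
    · have : α = γ := min_eq_left h
      simp only [hβdef, this]
      linarith [ht.1]
    · have : α = s := min_eq_right h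
      simp only [hβdef, this]
      linarith
  have hαβ : α + β = γ := by simp [hβdef]
  have hceq : c = qmk γ n1 n2 n3 := by
    apply Quaternion.ext
    · rw [qmk_re, hcγ]
    · rw [qmk_imI, hsγ, hi]
    · rw [qmk_imJ, hsγ, hj]
    · rw [qmk_imK, hsγ, hk]
  refine ⟨qmk α n1 n2 n3, qmk β n1 n2 n3, qmk_norm α hn, qmk_norm β hn, ?_, ?_, ?_⟩
  · rw [qmk_re]
    exact Real.cos_le_cos_of_nonneg_of_le_pi hα0 hs.2 hαs
  · rw [qmk_re]
    exact Real.cos_le_cos_of_nonneg_of_le_pi hβ0 ht.2 hβt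
  · rw [qmk_mul α β hn, hαβ, hceq]

theorem stmt6 (U₀ V₀ : H) (hU₀ : U₀ ∈ S3) (hV₀ : V₀ ∈ S3) (s t : ℝ)
    (hs : s ∈ Set.Icc 0 π) (ht : t ∈ Set.Icc 0 π) :
    (s + t ∈ Set.Icc 0 π → mprod (cap U₀ s) (cap V₀ t) = cap (U₀ * V₀) (s + t)) ∧
      (s + t ∈ Set.Icc π (2 * π) → mprod (cap U₀ s) (cap V₀ t) = S3) := by
  have hU1 : ‖U₀‖ = 1 := hU₀
  have hV1 : ‖V₀‖ = 1 := hV₀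
  have hnsU : Quaternion.normSq U₀ = 1 := by
    rw [Quaternion.normSq_eq_norm_mul_self, hU1, one_mul]
  have hnsV : Quaternion.normSq V₀ = 1 := by
    rw [Quaternion.normSq_eq_norm_mul_self, hV1, one_mul]
  have hUs : U₀ * star U₀ = 1 := by
    rw [Quaternion.self_mul_star, hnsU]; exact_mod_cast rfl
  have hsU : star U₀ * U₀ = 1 := by
    rw [Quaternion.star_mul_self, hnsU]; exact_mod_cast rfl
  have hVs : V₀ * star V₀ = 1 := by
    rw [Quaternion.self_mul_star, hnsV]; exact_mod_cast rfl
  have hsV : star V₀ * V₀ = 1 := by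
    rw [Quaternion.star_mul_self, hnsV]; exact_mod_cast rfl
  have cU1 : ∀ x : H, star U₀ * (U₀ * x) = x := fun x => by rw [← mul_assoc, hsU, one_mul]
  have cU2 : ∀ x : H, U₀ * (star U₀ * x) = x := fun x => by rw [← mul_assoc, hUs, one_mul]
  have cV1 : ∀ x : H, star V₀ * (V₀ * x) = x := fun x => by rw [← mul_assoc, hsV, one_mul]
  have cV2 : ∀ x : H, V₀ * (star V₀ * x) = x := fun x => by rw [← mul_assoc, hVs, one_mul]
  -- shared reverse construction
  have hrev : ∀ c : H, ‖c‖ = 1 → Real.arccos (c * (star V₀ * star U₀)).re ≤ s + t →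
      c ∈ mprod (cap U₀ s) (cap V₀ t) := by
    intro c hc1 hγ
    have hw : ‖c * (star V₀ * star U₀)‖ = 1 := by
      rw [norm_mul, norm_mul, Quaternion.norm_star, Quaternion.norm_star, hc1, hU1, hV1]
      ring
    obtain ⟨a, b, ha, hb, hras, hrbt, hab⟩ := rev hs ht hw hγ
    simp only [mprod, Set.mem_image2]
    refine ⟨a * U₀, ⟨?_, ?_⟩, star U₀ * (b * (U₀ * V₀)), ⟨?_, ?_⟩, ?_⟩
    · show ‖a * U₀‖ = 1
      rw [norm_mul, ha, hU1, one_mul]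
    · show qInner (a * U₀) U₀ ≥ Real.cos s
      simp only [qInner, mul_assoc, hUs, mul_one]
      exact hras
    · show ‖star U₀ * (b * (U₀ * V₀))‖ = 1
      rw [norm_mul, norm_mul, norm_mul, Quaternion.norm_star, hb, hU1, hV1]
      ring
    · show qInner (star U₀ * (b * (U₀ * V₀))) V₀ ≥ Real.cos t
      have h1 : star U₀ * (b * (U₀ * V₀)) * star V₀ = star U₀ * (b * U₀) := by
        simp only [mul_assoc, hVs, mul_one]
      simp only [qInner]
      rw [h1, re_comm]
      simp only [mul_assoc, hUs, mul_one]
      exact hrbt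
    · calc a * U₀ * (star U₀ * (b * (U₀ * V₀)))
          = a * (U₀ * (star U₀ * (b * (U₀ * V₀)))) := by rw [mul_assoc]
        _ = a * (b * (U₀ * V₀)) := by rw [cU2]
        _ = a * b * (U₀ * V₀) := by rw [mul_assoc]
        _ = c * (star V₀ * star U₀) * (U₀ * V₀) := by rw [hab]
        _ = c * (star V₀ * (star U₀ * (U₀ * V₀))) := by rw [mul_assoc, mul_assoc]
        _ = c := by rw [cU1, hsV, mul_one]
  constructor
  · intro hst1
    apply Set.Subset.antisymm
    · rintro c hc
      simp only [mprod, Set.mem_image2] at hc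
      obtain ⟨u, ⟨hu1, hu2⟩, v, ⟨hv1, hv2⟩, rfl⟩ := hc
      have hu1' : ‖u‖ = 1 := hu1
      have hv1' : ‖v‖ = 1 := hv1
      simp only [qInner] at hu2 hv2
      constructor
      · show ‖u * v‖ = 1
        rw [norm_mul, hu1', hv1', one_mul]
      · show qInner (u * v) (U₀ * V₀) ≥ Real.cos (s + t)
        have ha : ‖u * star U₀‖ = 1 := by
          rw [norm_mul, Quaternion.norm_star, hu1', hU1, one_mul]
        have hb : ‖U₀ * (v * (star V₀ * star U₀))‖ = 1 := by
          rw [norm_mul, norm_mul, norm_mul, Quaternion.norm_star, Quaternion.norm_star,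
            hv1', hU1, hV1]
          ring
        have hrb : Real.cos t ≤ (U₀ * (v * (star V₀ * star U₀))).re := by
          rw [re_comm]
          have h1 : v * (star V₀ * star U₀) * U₀ = v * star V₀ := by
            simp only [mul_assoc, hsU, mul_one]
          rw [h1]
          exact hv2
        have hkey := fwd hs ht hst1.2 ha hb hu2 hrb
        have h2 : u * star U₀ * (U₀ * (v * (star V₀ * star U₀)))
            = u * v * star (U₀ * V₀) := by
          rw [star_mul]
          simp only [mul_assoc, cU1, cU2]
        rw [h2] at hkey
        simpa [qInner] using hkey
    · intro c hc
      obtain ⟨hc1, hc2⟩ := hc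
      have hc1' : ‖c‖ = 1 := hc1
      simp only [qInner, star_mul] at hc2
      have hw : ‖c * (star V₀ * star U₀)‖ = 1 := by
        rw [norm_mul, norm_mul, Quaternion.norm_star, Quaternion.norm_star, hc1', hU1, hV1]
        ring
      exact hrev c hc1' (arccos_le_of_cos_le hst1.1 hst1.2 hc2 (re_le_one hw))
  · intro hst2
    apply Set.Subset.antisymm
    · rintro c hc
      simp only [mprod, Set.mem_image2] at hc
      obtain ⟨u, ⟨hu1, _⟩, v, ⟨hv1, _⟩, rfl⟩ := hc
      have hu1' : ‖u‖ = 1 := hu1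
      have hv1' : ‖v‖ = 1 := hv1
      show ‖u * v‖ = 1
      rw [norm_mul, hu1', hv1', one_mul]
    · intro c hc1
      exact hrev c hc1 ((Real.arccos_le_pi _).trans hst2.1)
end
end

section
/- For all purely imaginary unit quaternions m, n and all a, b ∈ [0,π], the scalar part of the product exp(a m) exp(b n) satisfies re(exp(a m) exp(b n)) = cos a cos b − sin a sin b ⟨m,n⟩ ≥ cos(a + b). -/
open Real Set

noncomputable section

theorem stmt7 (m n : H) (hm : m.re = 0) (hm1 : ‖m‖ = 1)
    (hn : n.re = 0) (hn1 : ‖n‖ = 1)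
    (a b : ℝ) (ha : a ∈ Set.Icc 0 π) (hb : b ∈ Set.Icc 0 π) :
    (qexp a m * qexp b n).re
        = Real.cos a * Real.cos b - Real.sin a * Real.sin b * qInner m n ∧
      Real.cos (a + b) ≤ (qexp a m * qexp b n).re := by
  have heq : (qexp a m * qexp b n).re
      = Real.cos a * Real.cos b - Real.sin a * Real.sin b * qInner m n := by
    simp [qexp, qInner, Quaternion.re_mul, hm, hn]
    ring
  refine ⟨heq, ?_⟩
  rw [heq, Real.cos_add]
  have hsin : 0 ≤ Real.sin a * Real.sin b :=
    mul_nonneg (Real.sin_nonneg_of_mem_Icc ha) (Real.sin_nonneg_of_mem_Icc hb)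
  have hq : qInner m n ≤ 1 := by
    have h1 : ‖m * star n‖ = 1 := by rw [norm_mul, norm_star, hm1, hn1]; ring
    have h2 : (m * star n).re ^ 2 ≤ ‖m * star n‖ ^ 2 := by
      rw [sq, sq, ← Quaternion.normSq_eq_norm_mul_self, Quaternion.normSq_def']
      nlinarith [sq_nonneg (m * star n).imI, sq_nonneg (m * star n).imJ,
        sq_nonneg (m * star n).imK]
    rw [h1, one_pow] at h2
    show (m * star n).re ≤ 1
    nlinarith [h2]
  nlinarith
end
end

section
/- Let c₁, c₂ be purely imaginary unit quaternions, φ₁, φ₂ ∈ ℝ, δ₁, δ₂ ∈ [0,π], and set r := min over |s| ≤ δ₁, |t| ≤ δ₂ of (cos s cos t − sin s sin t ⟨c₁,c₂⟩). Then every W ∈ C(c₁,φ₁,δ₁) ⊗ C(c₂,φ₂,δ₂) satisfies ⟨W, exp(φ₁c₁) exp(φ₂c₂)⟩ ≥ r, and some element of this Minkowski product attains the value r; consequently the smallest spherical cap of the form U(exp(φ₁c₁)exp(φ₂c₂), η) containing C(c₁,φ₁,δ₁) ⊗ C(c₂,φ₂,δ₂) has η = arccos r. -/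
/-! Since `s ↦ exp(s c)` is a one-parameter subgroup with `exp(s c)* = exp(-s c)`, conjugating by
`exp(p c₁)` on the left and `exp(q c₂)` on the right turns
`⟨exp(a c₁) exp(b c₂), exp(p c₁) exp(q c₂)⟩` into `re (exp((a - p) c₁) exp((b - q) c₂))`,
which is `cos (a - p) cos (b - q) - sin (a - p) sin (b - q) ⟨c₁, c₂⟩`. So on the Minkowski
product `⟨·, exp(φ₁ c₁) exp(φ₂ c₂)⟩` takes exactly the values whose minimum defines `r`, and the
cap radius follows because `arccos` is antitone. -/

open Real Set

noncomputable section

/-- The great-circle arc C(c,φ,δ) = {exp(s c) : |s - φ| ≤ δ}. -/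
def Carc (c : H) (φ δ : ℝ) : Set H := {u : H | ∃ s : ℝ, |s - φ| ≤ δ ∧ u = qexp s c}

open Quaternion

lemma mul_self_eq_neg_one_of_re_eq_zero {c : H} (hc : c.re = 0) (hc' : ‖c‖ = 1) :
    c * c = -1 := by
  have h := self_mul_star c
  rw [star_eq_neg.2 hc, mul_neg, normSq_eq_norm_mul_self, hc', mul_one] at h
  simpa using congrArg Neg.neg h

lemma qexp_add {c : H} (hc : c.re = 0) (hc' : ‖c‖ = 1) (a b : ℝ) :
    qexp (a + b) c = qexp a c * qexp b c := by
  have hcc := mul_self_eq_neg_one_of_re_eq_zero hc hc'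
  simp only [qexp, cos_add, sin_add, add_mul, mul_add, mul_smul_comm, smul_mul_assoc, hcc]
  ext <;> simp <;> ring

lemma star_qexp {c : H} (hc : c.re = 0) (a : ℝ) : star (qexp a c) = qexp (-a) c := by
  simp [qexp, star_eq_neg.2 hc]

lemma norm_qexp_s9 {c : H} (hc : c.re = 0) (hc' : ‖c‖ = 1) (a : ℝ) : ‖qexp a c‖ = 1 := by
  have h : qexp a c * star (qexp a c) = 1 := by
    rw [star_qexp hc, ← qexp_add hc hc', add_neg_cancel]
    simp [qexp]
  have h' := congrArg norm h
  rw [norm_mul, norm_star, norm_one, ← sq] at h'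
  exact (pow_eq_one_iff_of_nonneg (norm_nonneg _) two_ne_zero).1 h'

lemma qInner_eq_inner (a b : H) : qInner a b = inner ℝ a b := (inner_def a b).symm

lemma abs_qInner_le_one {a b : H} (ha : a ∈ S3) (hb : b ∈ S3) : |qInner a b| ≤ 1 := by
  simpa [qInner_eq_inner, show ‖a‖ = 1 from ha, show ‖b‖ = 1 from hb] using
    abs_real_inner_le_norm a b

lemma qInner_mul_mul (x y z w : H) : qInner (x * y) (z * w) = (star z * x * (y * star w)).re := by
  have re_mul_comm (p q : H) : (p * q).re = (q * p).re := by simp only [re_mul]; ring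
  rw [qInner, star_mul, ← mul_assoc, re_mul_comm]
  noncomm_ring

lemma re_qexp_mul_qexp {c₁ c₂ : H} (hc₁ : c₁.re = 0) (hc₂ : c₂.re = 0) (s t : ℝ) :
    (qexp s c₁ * qexp t c₂).re = cos s * cos t - sin s * sin t * qInner c₁ c₂ := by
  simp only [qexp, qInner, re_mul, re_add, re_coe, re_smul, hc₁, smul_eq_mul, mul_zero, add_zero,
    hc₂, imI_add, imI_coe, imI_smul, zero_add, imJ_add, imJ_coe, imJ_smul, imK_add, imK_coe,
    imK_smul, re_star, imI_star, imJ_star, imK_star, mul_neg, sub_neg_eq_add]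
  ring

lemma qInner_qexp_mul_qexp {c₁ c₂ : H} (hc₁ : c₁.re = 0) (hc₁' : ‖c₁‖ = 1)
    (hc₂ : c₂.re = 0) (hc₂' : ‖c₂‖ = 1) (a b p q : ℝ) :
    qInner (qexp a c₁ * qexp b c₂) (qexp p c₁ * qexp q c₂) =
      cos (a - p) * cos (b - q) - sin (a - p) * sin (b - q) * qInner c₁ c₂ := by
  rw [qInner_mul_mul, star_qexp hc₁, star_qexp hc₂, ← qexp_add hc₁ hc₁', ← qexp_add hc₂ hc₂',
    ← re_qexp_mul_qexp hc₁ hc₂, neg_add_eq_sub, ← sub_eq_add_neg]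

lemma qInner_image_mprod_Carc {c₁ c₂ : H} (hc₁ : c₁.re = 0) (hc₁' : ‖c₁‖ = 1)
    (hc₂ : c₂.re = 0) (hc₂' : ‖c₂‖ = 1) (φ₁ φ₂ δ₁ δ₂ : ℝ) :
    (qInner · (qexp φ₁ c₁ * qexp φ₂ c₂)) '' mprod (Carc c₁ φ₁ δ₁) (Carc c₂ φ₂ δ₂) =
      {x | ∃ s t : ℝ, |s| ≤ δ₁ ∧ |t| ≤ δ₂ ∧ x = cos s * cos t - sin s * sin t * qInner c₁ c₂} := by
  ext x
  constructor
  · rintro ⟨_, ⟨_, ⟨s, hs, rfl⟩, _, ⟨t, ht, rfl⟩, rfl⟩, rfl⟩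
    exact ⟨s - φ₁, t - φ₂, hs, ht, qInner_qexp_mul_qexp hc₁ hc₁' hc₂ hc₂' _ _ _ _⟩
  · rintro ⟨s, t, hs, ht, rfl⟩
    refine ⟨_, ⟨_, ⟨φ₁ + s, by simpa using hs, rfl⟩, _, ⟨φ₂ + t, by simpa using ht, rfl⟩, rfl⟩, ?_⟩
    simp [qInner_qexp_mul_qexp hc₁ hc₁' hc₂ hc₂']

lemma mul_mem_S3_s9 {a b : H} (ha : a ∈ S3) (hb : b ∈ S3) : a * b ∈ S3 := by
  simp_all [S3]

lemma mprod_subset_S3 {U V : Set H} (hU : U ⊆ S3) (hV : V ⊆ S3) : mprod U V ⊆ S3 := by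
  rintro _ ⟨a, ha, b, hb, rfl⟩
  exact mul_mem_S3_s9 (hU ha) (hV hb)

lemma qexp_mem_S3 {c : H} (hc : c.re = 0) (hc' : ‖c‖ = 1) (s : ℝ) : qexp s c ∈ S3 :=
  norm_qexp_s9 hc hc' s

lemma Carc_subset_S3 {c : H} (hc : c.re = 0) (hc' : ‖c‖ = 1) (φ δ : ℝ) : Carc c φ δ ⊆ S3 := by
  rintro _ ⟨s, -, rfl⟩
  exact qexp_mem_S3 hc hc' s

lemma isLeast_arccos_of_isLeast_qInner {A : Set H} {Y : H} {m : ℝ} (hA : A ⊆ S3) (hY : Y ∈ S3)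
    (hm : IsLeast ((qInner · Y) '' A) m) :
    IsLeast {η : ℝ | η ∈ Icc 0 π ∧ A ⊆ cap Y η} (arccos m) := by
  obtain ⟨⟨W₀, hW₀, rfl⟩, hlow⟩ := hm
  have hW₀Y := abs_le.1 (abs_qInner_le_one (hA hW₀) hY)
  refine ⟨⟨⟨arccos_nonneg _, arccos_le_pi _⟩, fun W hW => ⟨hA hW, ?_⟩⟩, ?_⟩
  · rw [cos_arccos hW₀Y.1 hW₀Y.2]
    exact hlow ⟨W, hW, rfl⟩
  · rintro η ⟨⟨hη₀, hηπ⟩, hsub⟩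
    calc arccos (qInner W₀ Y) ≤ arccos (cos η) := arccos_le_arccos (hsub hW₀).2
      _ = η := arccos_cos hη₀ hηπ

theorem stmt9_general (c₁ c₂ : H) (hc₁ : c₁.re = 0) (hc₁' : ‖c₁‖ = 1)
    (hc₂ : c₂.re = 0) (hc₂' : ‖c₂‖ = 1)
    (φ₁ φ₂ : ℝ) (δ₁ δ₂ : ℝ)
    (r : ℝ)
    (hr : IsLeast {x : ℝ | ∃ s t : ℝ, |s| ≤ δ₁ ∧ |t| ≤ δ₂ ∧
      x = Real.cos s * Real.cos t - Real.sin s * Real.sin t * qInner c₁ c₂} r) :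
    (∀ W ∈ mprod (Carc c₁ φ₁ δ₁) (Carc c₂ φ₂ δ₂),
        qInner W (qexp φ₁ c₁ * qexp φ₂ c₂) ≥ r) ∧
      (∃ W ∈ mprod (Carc c₁ φ₁ δ₁) (Carc c₂ φ₂ δ₂),
        qInner W (qexp φ₁ c₁ * qexp φ₂ c₂) = r) ∧
      IsLeast {η : ℝ | η ∈ Set.Icc 0 π ∧
          mprod (Carc c₁ φ₁ δ₁) (Carc c₂ φ₂ δ₂) ⊆ cap (qexp φ₁ c₁ * qexp φ₂ c₂) η}
        (Real.arccos r) := by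
  rw [← qInner_image_mprod_Carc hc₁ hc₁' hc₂ hc₂' φ₁ φ₂] at hr
  have hsub : mprod (Carc c₁ φ₁ δ₁) (Carc c₂ φ₂ δ₂) ⊆ S3 :=
    mprod_subset_S3 (Carc_subset_S3 hc₁ hc₁' φ₁ δ₁) (Carc_subset_S3 hc₂ hc₂' φ₂ δ₂)
  have hY : qexp φ₁ c₁ * qexp φ₂ c₂ ∈ S3 :=
    mul_mem_S3_s9 (qexp_mem_S3 hc₁ hc₁' φ₁) (qexp_mem_S3 hc₂ hc₂' φ₂)
  exact ⟨fun W hW => hr.2 ⟨W, hW, rfl⟩, hr.1, isLeast_arccos_of_isLeast_qInner hsub hY hr⟩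

theorem stmt9 (c₁ c₂ : H) (hc₁ : c₁.re = 0) (hc₁' : ‖c₁‖ = 1)
    (hc₂ : c₂.re = 0) (hc₂' : ‖c₂‖ = 1)
    (φ₁ φ₂ : ℝ) (δ₁ δ₂ : ℝ) (hδ₁ : δ₁ ∈ Set.Icc 0 π) (hδ₂ : δ₂ ∈ Set.Icc 0 π)
    (r : ℝ)
    (hr : IsLeast {x : ℝ | ∃ s t : ℝ, |s| ≤ δ₁ ∧ |t| ≤ δ₂ ∧
      x = Real.cos s * Real.cos t - Real.sin s * Real.sin t * qInner c₁ c₂} r) :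
    (∀ W ∈ mprod (Carc c₁ φ₁ δ₁) (Carc c₂ φ₂ δ₂),
        qInner W (qexp φ₁ c₁ * qexp φ₂ c₂) ≥ r) ∧
      (∃ W ∈ mprod (Carc c₁ φ₁ δ₁) (Carc c₂ φ₂ δ₂),
        qInner W (qexp φ₁ c₁ * qexp φ₂ c₂) = r) ∧
      IsLeast {η : ℝ | η ∈ Set.Icc 0 π ∧
          mprod (Carc c₁ φ₁ δ₁) (Carc c₂ φ₂ δ₂) ⊆ cap (qexp φ₁ c₁ * qexp φ₂ c₂) η}
        (Real.arccos r) :=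
  stmt9_general c₁ c₂ hc₁ hc₁' hc₂ hc₂' φ₁ φ₂ δ₁ δ₂ r hr
end
end

section
/- Let δ₁, δ₂ ∈ [0, π/2] and k ∈ [−1,1]. Then for all s, t with |s| ≤ δ₁ and |t| ≤ δ₂, one has cos s cos t − k sin s sin t ≥ cos δ₁ cos δ₂ − |k| sin δ₁ sin δ₂, and this lower bound is attained at one of the four corner points (±δ₁, ±δ₂), (±δ₁, ∓δ₂) of the rectangle. Moreover, if δ₁ > 0, δ₂ > 0 and |k| < 1, then cos δ₁ cos δ₂ − |k| sin δ₁ sin δ₂ > cos(δ₁ + δ₂). -/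
open Real Set

noncomputable section

theorem stmt10 (δ₁ δ₂ k : ℝ) (h₁ : δ₁ ∈ Set.Icc 0 (π / 2))
    (h₂ : δ₂ ∈ Set.Icc 0 (π / 2)) (hk : k ∈ Set.Icc (-1 : ℝ) 1) :
    (∀ s t : ℝ, |s| ≤ δ₁ → |t| ≤ δ₂ →
        Real.cos δ₁ * Real.cos δ₂ - |k| * Real.sin δ₁ * Real.sin δ₂
          ≤ Real.cos s * Real.cos t - k * Real.sin s * Real.sin t) ∧
      (∃ s t : ℝ, (s = δ₁ ∨ s = -δ₁) ∧ (t = δ₂ ∨ t = -δ₂) ∧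
        Real.cos s * Real.cos t - k * Real.sin s * Real.sin t
          = Real.cos δ₁ * Real.cos δ₂ - |k| * Real.sin δ₁ * Real.sin δ₂) ∧
      (0 < δ₁ → 0 < δ₂ → |k| < 1 →
        Real.cos (δ₁ + δ₂) <
          Real.cos δ₁ * Real.cos δ₂ - |k| * Real.sin δ₁ * Real.sin δ₂) := by

  obtain ⟨hd1, hd1'⟩ := h₁
  obtain ⟨hd2, hd2'⟩ := h₂
  have hpi : δ₁ ≤ π := le_trans hd1' (by linarith [Real.pi_pos])
  have hpi2 : δ₂ ≤ π := le_trans hd2' (by linarith [Real.pi_pos])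
  have key : ∀ (δ s : ℝ), 0 ≤ δ → δ ≤ π/2 → |s| ≤ δ →
      Real.cos δ ≤ Real.cos s ∧ |Real.sin s| ≤ Real.sin δ := by
    intro δ s h0 hp hs
    constructor
    · rw [← Real.cos_abs s]
      exact Real.cos_le_cos_of_nonneg_of_le_pi (abs_nonneg s)
        (le_trans hp (by linarith [Real.pi_pos])) hs
    · have habs : Real.sin |s| ≤ Real.sin δ := by
        apply Real.strictMonoOn_sin.monotoneOn _ _ hs
        · exact ⟨by linarith [abs_nonneg s, Real.pi_pos], le_trans hs hp⟩
        · exact ⟨by linarith [Real.pi_pos], hp⟩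
      rcases le_or_gt 0 s with h | h
      · rwa [abs_of_nonneg (Real.sin_nonneg_of_nonneg_of_le_pi h
          (le_trans (by rw [abs_of_nonneg h] at hs; exact hs)
            (le_trans hp (by linarith [Real.pi_pos])))),
          ← abs_of_nonneg h]
      · have hsle : Real.sin s ≤ 0 := by
          apply Real.sin_nonpos_of_nonpos_of_neg_pi_le h.le
          have := hs
          rw [abs_of_neg h] at this
          linarith [Real.pi_pos]
        rw [abs_of_nonpos hsle, ← Real.sin_neg, ← abs_of_neg h] at *
        exact habs
  refine ⟨?_, ?_, ?_⟩
  · intro s t hs ht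
    obtain ⟨hc1, hs1⟩ := key δ₁ s hd1 hd1' hs
    obtain ⟨hc2, hs2⟩ := key δ₂ t hd2 hd2' ht
    have hcd1 : 0 ≤ Real.cos δ₁ := Real.cos_nonneg_of_mem_Icc ⟨by linarith [Real.pi_pos], hd1'⟩
    have hcd2 : 0 ≤ Real.cos δ₂ := Real.cos_nonneg_of_mem_Icc ⟨by linarith [Real.pi_pos], hd2'⟩
    have hcc : Real.cos δ₁ * Real.cos δ₂ ≤ Real.cos s * Real.cos t :=
      mul_le_mul hc1 hc2 hcd2 (by linarith)
    have hkss : k * Real.sin s * Real.sin t ≤ |k| * Real.sin δ₁ * Real.sin δ₂ := by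
      calc k * Real.sin s * Real.sin t ≤ |k * Real.sin s * Real.sin t| := le_abs_self _
        _ = |k| * |Real.sin s| * |Real.sin t| := by rw [abs_mul, abs_mul]
        _ ≤ |k| * Real.sin δ₁ * Real.sin δ₂ := by
            apply mul_le_mul (mul_le_mul le_rfl hs1 (abs_nonneg _) (abs_nonneg _)) hs2
              (abs_nonneg _)
              (mul_nonneg (abs_nonneg _) (Real.sin_nonneg_of_nonneg_of_le_pi hd1 hpi))
    linarith
  · rcases le_or_gt 0 k with h | h
    · exact ⟨δ₁, δ₂, Or.inl rfl, Or.inl rfl, by rw [abs_of_nonneg h]⟩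
    · refine ⟨δ₁, -δ₂, Or.inl rfl, Or.inr rfl, ?_⟩
      rw [Real.sin_neg, Real.cos_neg, abs_of_neg h]; ring
  · intro hp1 hp2 hkl
    rw [Real.cos_add]
    have hs1 : 0 < Real.sin δ₁ := Real.sin_pos_of_pos_of_lt_pi hp1 (by linarith [Real.pi_pos])
    have hs2 : 0 < Real.sin δ₂ := Real.sin_pos_of_pos_of_lt_pi hp2 (by linarith [Real.pi_pos])
    nlinarith [mul_lt_mul_of_pos_right hkl (mul_pos hs1 hs2)]
end
end

section
/- Let m, n be purely imaginary unit quaternions and φ₁, φ₂ ∈ (0,π). Let Π_m := {v ∈ ℍ : re v = 0, ⟨v,m⟩ = 0} and Π_n := {w ∈ ℍ : re w = 0, ⟨w,n⟩ = 0} (each a 2-dimensional real subspace of ℍ). Then the real linear span of the set {v · exp(φ₂ n) : v ∈ Π_m} ∪ {exp(φ₁ m) · w : w ∈ Π_n} has dimension strictly less than 3 if and only if m = n or m = −n. -/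
open Real Set
open Quaternion RealInnerProductSpace

noncomputable section

namespace Stmt11Aux

lemma star_im {u : H} (hu : u.re = 0) : star u = -u := Quaternion.star_eq_neg.mpr hu

lemma sq_im_unit {u : H} (hu : u.re = 0) (hu1 : ‖u‖ = 1) : u * u = -1 := by
  have h1 : Quaternion.normSq u = 1 := by
    rw [Quaternion.normSq_eq_norm_mul_self, hu1]; ring
  have := Quaternion.self_mul_star (a := u)
  rw [star_im hu, h1] at this
  have : u * u = -(1 : H) := by
    have h2 : -(u * u) = 1 := by rw [← mul_neg]; simpa using this
    linear_combination (norm := noncomm_ring) -h2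
  simpa using this

lemma mulE {m : H} (hm2 : m * m = -1) (a b c d : ℝ) :
    ((a:H) + b • m) * ((c:H) + d • m)
      = ((a*c - b*d : ℝ) : H) + (a*d + b*c) • m := by
  have h1 : (a:H) * (c:H) = ((a*c : ℝ) : H) := by rw [Quaternion.coe_mul]
  have h2 : (a:H) * (d • m) = (a*d) • m := by
    rw [mul_smul_comm, Quaternion.coe_mul_eq_smul, smul_smul, mul_comm]
  have h3 : (b • m) * (c:H) = (b*c) • m := by
    rw [smul_mul_assoc, Quaternion.mul_coe_eq_smul, smul_smul, mul_comm]
  have h4 : (b • m) * (d • m) = ((-(b*d) : ℝ) : H) := by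
    rw [smul_mul_assoc, mul_smul_comm, smul_smul, hm2, smul_neg, ← Quaternion.coe_one,
      Quaternion.smul_coe, ← Quaternion.coe_neg]
    norm_num
  rw [add_mul, mul_add, mul_add, h1, h2, h3, h4]
  push_cast
  module

lemma starE (m : H) (hm : m.re = 0) (a b : ℝ) :
    star ((a:H) + b • m) = (a:H) + (-b) • m := by
  rw [star_add, Quaternion.star_coe, Quaternion.star_smul, star_im hm]
  module

lemma reE (m : H) (hm : m.re = 0) (a b : ℝ) : ((a:H) + b • m).re = a := by
  simp [Quaternion.re_smul, hm]


lemma qexp_E (s : ℝ) (u : H) : qexp s u = ((Real.cos s : ℝ):H) + Real.sin s • u := rfl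

lemma qexp_mul_star {u : H} (hu : u.re = 0) (hu1 : ‖u‖ = 1) (s : ℝ) :
    qexp s u * star (qexp s u) = 1 := by
  have hm2 := sq_im_unit hu hu1
  rw [qexp_E, starE u hu, mulE hm2]
  have h1 : Real.cos s * Real.cos s - Real.sin s * -Real.sin s = 1 := by
    nlinarith [Real.sin_sq_add_cos_sq s]
  have h2 : Real.cos s * -Real.sin s + Real.sin s * Real.cos s = 0 := by ring
  rw [h1, h2]
  simp

lemma normSq_qexp {u : H} (hu : u.re = 0) (hu1 : ‖u‖ = 1) (s : ℝ) :
    Quaternion.normSq (qexp s u) = 1 := by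
  have := Quaternion.self_mul_star (a := qexp s u)
  rw [qexp_mul_star hu hu1] at this
  exact_mod_cast Quaternion.coe_injective (by rw [← this]; norm_cast)

lemma star_mul_qexp {u : H} (hu : u.re = 0) (hu1 : ‖u‖ = 1) (s : ℝ) :
    star (qexp s u) * qexp s u = 1 := by
  rw [Quaternion.star_mul_self, normSq_qexp hu hu1]; norm_cast

lemma qexp_ne_zero {u : H} (hu : u.re = 0) (hu1 : ‖u‖ = 1) (s : ℝ) :
    qexp s u ≠ 0 := by
  intro h
  have := normSq_qexp hu hu1 s
  rw [h] at this
  simp at this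

lemma re_mul_comm (a b : H) : (a * b).re = (b * a).re := by
  simp only [Quaternion.re_mul]; ring

lemma qInner_eq (a b : H) : qInner a b = ⟪a, b⟫ := (Quaternion.inner_def a b).symm

lemma mem_orthogonal_span_pair (a b x : H) :
    x ∈ (Submodule.span ℝ ({a, b} : Set H))ᗮ ↔ ⟪a, x⟫ = 0 ∧ ⟪b, x⟫ = 0 := by
  rw [Submodule.mem_orthogonal]
  constructor
  · intro h
    exact ⟨h a (Submodule.subset_span (by simp)), h b (Submodule.subset_span (by simp))⟩
  · rintro ⟨h1, h2⟩ u hu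
    obtain ⟨p, q, rfl⟩ := Submodule.mem_span_pair.mp hu
    rw [inner_add_left, real_inner_smul_left, real_inner_smul_left, h1, h2]
    ring

lemma finrank_span_pair {x y : H} (hx : x ≠ 0) (hxy : ⟪x, y⟫ = 0) (hy : y ≠ 0) :
    Module.finrank ℝ (Submodule.span ℝ ({x, y} : Set H)) = 2 := by
  have hli : LinearIndependent ℝ ![x, y] := by
    rw [LinearIndependent.pair_iff' hx]
    intro a h
    rcases eq_or_ne a 0 with rfl | ha
    · exact hy (by simpa using h.symm)
    · have : ⟪x, y⟫ = a * ⟪x, x⟫ := by rw [← h, real_inner_smul_right]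
      rw [hxy, real_inner_self_eq_norm_sq] at this
      have hx' : ‖x‖ ≠ 0 := norm_ne_zero_iff.mpr hx
      rcases mul_eq_zero.mp this.symm with h' | h'
      · exact ha h'
      · exact hx' (by nlinarith)
  have hr : Set.range ![x, y] = ({x, y} : Set H) := by
    ext z; simp [Fin.exists_fin_two]; tauto
  rw [← hr, finrank_span_eq_card hli]
  simp


lemma inner_mul_right (a b c : H) : ⟪a * c, b * c⟫ = Quaternion.normSq c * ⟪a, b⟫ := by
  rw [Quaternion.inner_def, Quaternion.inner_def, star_mul]
  have h : a * c * (star c * star b) = ↑(Quaternion.normSq c) * (a * star b) := by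
    rw [show a * c * (star c * star b) = a * (c * star c) * star b by noncomm_ring,
      Quaternion.self_mul_star, ← Quaternion.coe_commutes]
    noncomm_ring
  rw [h, Quaternion.coe_mul_eq_smul, Quaternion.re_smul, smul_eq_mul]

lemma inner_mul_left (a b c : H) : ⟪c * a, c * b⟫ = Quaternion.normSq c * ⟪a, b⟫ := by
  rw [Quaternion.inner_def, Quaternion.inner_def, star_mul]
  have h : (c * a * (star b * star c)).re = ((star c * c) * (a * star b)).re := by
    rw [show c * a * (star b * star c) = c * (a * star b) * star c by noncomm_ring, re_mul_comm]
    congr 1; noncomm_ring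
  rw [h, Quaternion.star_mul_self, Quaternion.coe_mul_eq_smul, Quaternion.re_smul, smul_eq_mul]

lemma inner_one_left (v : H) : ⟪(1 : H), v⟫ = v.re := by
  rw [Quaternion.inner_def, one_mul, Quaternion.re_star]

end Stmt11Aux

open Stmt11Aux in
theorem stmt11 (m n : H) (hm : m.re = 0) (hm1 : ‖m‖ = 1)
    (hn : n.re = 0) (hn1 : ‖n‖ = 1)
    (φ₁ φ₂ : ℝ) (hφ₁ : φ₁ ∈ Set.Ioo 0 π) (hφ₂ : φ₂ ∈ Set.Ioo 0 π) :
    Module.finrank ℝ (Submodule.span ℝ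
        (((fun v : H => v * qexp φ₂ n) '' {v : H | v.re = 0 ∧ qInner v m = 0}) ∪
         ((fun w : H => qexp φ₁ m * w) '' {w : H | w.re = 0 ∧ qInner w n = 0}))) < 3
      ↔ (m = n ∨ m = -n) := by
  have hm2 : m * m = -1 := sq_im_unit hm hm1
  have hn2 : n * n = -1 := sq_im_unit hn hn1
  have hmne : m ≠ 0 := fun h => by rw [h] at hm1; simp at hm1
  have hnne : n ≠ 0 := fun h => by rw [h] at hn1; simp at hn1
  set e₁ : H := qexp φ₁ m with he₁def
  set e₂ : H := qexp φ₂ n with he₂def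
  have he₂ne : e₂ ≠ 0 := qexp_ne_zero hn hn1 φ₂
  have he₁ne : e₁ ≠ 0 := qexp_ne_zero hm hm1 φ₁
  have hns₁ : Quaternion.normSq e₁ = 1 := normSq_qexp hm hm1 φ₁
  have hns₂ : Quaternion.normSq e₂ = 1 := normSq_qexp hn hn1 φ₂
  set K₁ : Submodule ℝ H := Submodule.span ℝ ({e₂, m * e₂} : Set H) with hK₁def
  set K₂ : Submodule ℝ H := Submodule.span ℝ ({e₁, e₁ * n} : Set H) with hK₂def
  -- inner product computations
  have hIA1 : ∀ v : H, ⟪e₂, v * e₂⟫ = v.re := by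
    intro v
    calc ⟪e₂, v * e₂⟫ = ⟪1 * e₂, v * e₂⟫ := by rw [one_mul]
      _ = Quaternion.normSq e₂ * ⟪(1:H), v⟫ := inner_mul_right 1 v e₂
      _ = v.re := by rw [hns₂, inner_one_left, one_mul]
  have hIA2 : ∀ v : H, ⟪m * e₂, v * e₂⟫ = qInner v m := by
    intro v
    rw [inner_mul_right, hns₂, one_mul, real_inner_comm, Quaternion.inner_def]
    rfl
  have hIB1 : ∀ w : H, ⟪e₁, e₁ * w⟫ = w.re := by
    intro w
    calc ⟪e₁, e₁ * w⟫ = ⟪e₁ * 1, e₁ * w⟫ := by rw [mul_one]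
      _ = Quaternion.normSq e₁ * ⟪(1:H), w⟫ := inner_mul_left 1 w e₁
      _ = w.re := by rw [hns₁, inner_one_left, one_mul]
  have hIB2 : ∀ w : H, ⟪e₁ * n, e₁ * w⟫ = qInner w n := by
    intro w
    rw [inner_mul_left, hns₁, one_mul, real_inner_comm, Quaternion.inner_def]
    rfl
  -- image sets are orthogonal complements
  have hA : ((fun v : H => v * e₂) '' {v : H | v.re = 0 ∧ qInner v m = 0}) = ↑(K₁ᗮ) := by
    ext x
    simp only [Set.mem_image, Set.mem_setOf_eq, SetLike.mem_coe, hK₁def,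
      mem_orthogonal_span_pair]
    constructor
    · rintro ⟨v, ⟨hv0, hvm⟩, rfl⟩
      exact ⟨by rw [hIA1, hv0], by rw [hIA2, hvm]⟩
    · rintro ⟨h1, h2⟩
      have hx : (x * star e₂) * e₂ = x := by
        rw [mul_assoc, star_mul_qexp hn hn1, mul_one]
      refine ⟨x * star e₂, ⟨?_, ?_⟩, hx⟩
      · have := hIA1 (x * star e₂); rw [hx] at this; rw [← this, h1]
      · have := hIA2 (x * star e₂); rw [hx] at this; rw [← this, h2]
  have hB : ((fun w : H => e₁ * w) '' {w : H | w.re = 0 ∧ qInner w n = 0}) = ↑(K₂ᗮ) := by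
    ext x
    simp only [Set.mem_image, Set.mem_setOf_eq, SetLike.mem_coe, hK₂def,
      mem_orthogonal_span_pair]
    constructor
    · rintro ⟨w, ⟨hw0, hwn⟩, rfl⟩
      exact ⟨by rw [hIB1, hw0], by rw [hIB2, hwn]⟩
    · rintro ⟨h1, h2⟩
      have hx : e₁ * (star e₁ * x) = x := by
        rw [← mul_assoc, qexp_mul_star hm hm1, one_mul]
      refine ⟨star e₁ * x, ⟨?_, ?_⟩, hx⟩
      · have := hIB1 (star e₁ * x); rw [hx] at this; rw [← this, h1]
      · have := hIB2 (star e₁ * x); rw [hx] at this; rw [← this, h2]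
  rw [hA, hB, Submodule.span_union, Submodule.span_eq, Submodule.span_eq]
  have hperp : K₁ᗮ ⊔ K₂ᗮ = (K₁ ⊓ K₂)ᗮ := by
    have h := Submodule.inf_orthogonal K₁ᗮ K₂ᗮ
    rw [Submodule.orthogonal_orthogonal, Submodule.orthogonal_orthogonal] at h
    rw [← Submodule.orthogonal_orthogonal (K₁ᗮ ⊔ K₂ᗮ), ← h]
  rw [hperp]
  have hsum : Module.finrank ℝ ↥(K₁ ⊓ K₂) + Module.finrank ℝ ↥((K₁ ⊓ K₂)ᗮ) = 4 := by
    rw [Submodule.finrank_add_finrank_orthogonal]; exact Quaternion.finrank_eq_four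
  -- finranks of K₁ K₂
  have hK₁fin : Module.finrank ℝ ↥K₁ = 2 :=
    finrank_span_pair he₂ne (by rw [hIA1, hm]) (mul_ne_zero hmne he₂ne)
  have hK₂fin : Module.finrank ℝ ↥K₂ = 2 :=
    finrank_span_pair he₁ne (by rw [hIB1, hn]) (mul_ne_zero he₁ne hnne)
  constructor
  · -- forward direction
    intro hlt
    have h2le : 2 ≤ Module.finrank ℝ ↥(K₁ ⊓ K₂) := by omega
    have hinf1 : K₁ ⊓ K₂ = K₁ :=
      Submodule.eq_of_le_of_finrank_le inf_le_left (by omega)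
    have hinf2 : K₁ ⊓ K₂ = K₂ :=
      Submodule.eq_of_le_of_finrank_le inf_le_right (by omega)
    have hKK : K₂ = K₁ := hinf2 ▸ hinf1
    have he₁K : e₁ ∈ K₁ := by
      rw [← hKK]; exact Submodule.subset_span (by simp)
    have he₁nK : e₁ * n ∈ K₁ := by
      rw [← hKK]; exact Submodule.subset_span (by simp)
    obtain ⟨a, b, hab⟩ := Submodule.mem_span_pair.mp he₁K
    obtain ⟨c, d, hcd⟩ := Submodule.mem_span_pair.mp he₁nK
    have hab' : ((a:H) + b • m) * e₂ = e₁ := by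
      rw [add_mul, Quaternion.coe_mul_eq_smul, smul_mul_assoc]; exact hab
    have hcd' : ((c:H) + d • m) * e₂ = e₁ * n := by
      rw [add_mul, Quaternion.coe_mul_eq_smul, smul_mul_assoc]; exact hcd
    have hnsp : Quaternion.normSq ((a:H) + b • m) = 1 := by
      have h := map_mul Quaternion.normSq ((a:H) + b • m) e₂
      rw [hab', hns₁, hns₂, mul_one] at h
      exact h.symm
    have he₂eq : star ((a:H) + b • m) * e₁ = e₂ := by
      rw [← hab', ← mul_assoc, Quaternion.star_mul_self, hnsp]
      norm_num
    have key : e₁ * n = (((c:H) + d • m) * star ((a:H) + b • m)) * e₁ := by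
      rw [mul_assoc, he₂eq, hcd']
    rw [starE m hm, mulE hm2] at key
    set U : ℝ := c * a - d * (-b) with hUdef
    set V : ℝ := c * (-b) + d * a with hVdef
    have hcomm : ((U:H) + V • m) * e₁ = e₁ * ((U:H) + V • m) := by
      rw [he₁def, qexp_E, mulE hm2, mulE hm2]
      rw [show U * Real.cos φ₁ - V * Real.sin φ₁
            = Real.cos φ₁ * U - Real.sin φ₁ * V by ring,
          show U * Real.sin φ₁ + V * Real.cos φ₁
            = Real.cos φ₁ * V + Real.sin φ₁ * U by ring]
    have hn' : n = (U:H) + V • m := by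
      calc n = star e₁ * (e₁ * n) := by
              rw [← mul_assoc, star_mul_qexp hm hm1, one_mul]
        _ = star e₁ * (((U:H) + V • m) * e₁) := by rw [key]
        _ = star e₁ * (e₁ * ((U:H) + V • m)) := by rw [hcomm]
        _ = (U:H) + V • m := by rw [← mul_assoc, star_mul_qexp hm hm1, one_mul]
    have hU : U = 0 := by
      have h := congrArg QuaternionAlgebra.re hn'
      rw [reE m hm, hn] at h
      exact h.symm
    have hnV : n = V • m := by rw [hn', hU]; simp
    have hVabs : |V| = 1 := by
      have h := congrArg norm hnV
      rw [norm_smul, hm1, hn1, mul_one, Real.norm_eq_abs] at h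
      exact h.symm
    rcases (abs_eq (by norm_num : (0:ℝ) ≤ 1)).mp hVabs with hV | hV
    · left; rw [hnV, hV, one_smul]
    · right; rw [hnV, hV]; simp
  · -- backward direction
    intro hmn
    have hEmem : ∀ x y : ℝ,
        ((x:H) + y • m) ∈ Submodule.span ℝ ({1, m} : Set H) := by
      intro x y
      have h1 : ((x:ℝ):H) = x • (1:H) := by
        rw [← Quaternion.coe_one, Quaternion.smul_coe, mul_one]
      exact Submodule.add_mem _
        (h1 ▸ Submodule.smul_mem _ _ (Submodule.subset_span (by simp)))
        (Submodule.smul_mem _ _ (Submodule.subset_span (by simp)))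
    set P : Submodule ℝ H := Submodule.span ℝ ({1, m} : Set H) with hPdef
    have hPfin : Module.finrank ℝ ↥P = 2 :=
      finrank_span_pair one_ne_zero (by rw [inner_one_left, hm]) hmne
    have hmE : ∀ x y : ℝ, m * ((x:H) + y • m) ∈ P := by
      intro x y
      have h : m * ((x:H) + y • m)
          = (((0:ℝ):H) + (1:ℝ) • m) * ((x:H) + y • m) := by norm_num
      rw [h, mulE hm2]; exact hEmem _ _
    have hEm : ∀ x y : ℝ, ((x:H) + y • m) * m ∈ P := by
      intro x y
      have h : ((x:H) + y • m) * m
          = ((x:H) + y • m) * (((0:ℝ):H) + (1:ℝ) • m) := by norm_num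
      rw [h, mulE hm2]; exact hEmem _ _
    have hsub : K₁ ≤ P ∧ K₂ ≤ P := by
      constructor
      · rw [hK₁def, Submodule.span_le]
        rintro z hz
        rcases hz with rfl | hz
        · rcases hmn with rfl | hmn
          · rw [he₂def, qexp_E]; exact hEmem _ _
          · obtain rfl : n = -m := by rw [hmn, neg_neg]
            have : qexp φ₂ (-m) = ((Real.cos φ₂ : ℝ):H) + (-Real.sin φ₂) • m := by
              rw [qexp_E]; module
            rw [he₂def, this]; exact hEmem _ _
        · rcases hz with rfl
          rcases hmn with rfl | hmn
          · rw [he₂def, qexp_E]; exact hmE _ _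
          · obtain rfl : n = -m := by rw [hmn, neg_neg]
            have : qexp φ₂ (-m) = ((Real.cos φ₂ : ℝ):H) + (-Real.sin φ₂) • m := by
              rw [qexp_E]; module
            rw [he₂def, this]; exact hmE _ _
      · rw [hK₂def, Submodule.span_le]
        rintro z hz
        rcases hz with rfl | hz
        · rw [he₁def, qexp_E]; exact hEmem _ _
        · rcases hz with rfl
          rcases hmn with rfl | hmn
          · rw [he₁def, qexp_E]; exact hEm _ _
          · obtain rfl : n = -m := by rw [hmn, neg_neg]
            have h : e₁ * (-m) = -(e₁ * m) := by rw [mul_neg]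
            rw [h]
            refine Submodule.neg_mem _ ?_
            rw [he₁def, qexp_E]; exact hEm _ _
    have hK₁P : K₁ = P := Submodule.eq_of_le_of_finrank_le hsub.1 (by omega)
    have hK₂P : K₂ = P := Submodule.eq_of_le_of_finrank_le hsub.2 (by omega)
    rw [hK₁P, hK₂P, inf_idem] at hsum ⊢
    omega
end
end

section
/- For all subsets U, V ⊆ S³, the boundary (frontier) of the Minkowski product U ⊗ V in the topology of S³ is contained in the Minkowski product of the boundaries: ∂(U ⊗ V) ⊆ ∂U ⊗ ∂V. -/
open Real Set

noncomputable section

lemma S3_eq_sphere : S3 = Metric.sphere (0:H) 1 := by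
  ext u; simp [S3, dist_zero_right]

lemma S3_closed : IsClosed S3 := by
  rw [S3_eq_sphere]; exact Metric.isClosed_sphere

lemma S3_compact : IsCompact S3 := by
  rw [S3_eq_sphere]; exact isCompact_sphere 0 1

lemma closure_mprod (U V : Set H) (hU : U ⊆ S3) (hV : V ⊆ S3) :
    closure (mprod U V) ⊆ mprod (closure U) (closure V) := by
  have hcU : IsCompact (closure U) :=
    S3_compact.of_isClosed_subset isClosed_closure (closure_minimal hU S3_closed)
  have hcV : IsCompact (closure V) :=
    S3_compact.of_isClosed_subset isClosed_closure (closure_minimal hV S3_closed)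
  have hcomp : IsCompact (mprod (closure U) (closure V)) := by
    have h := (hcU.prod hcV).image (continuous_mul : Continuous fun p : H × H => p.1 * p.2)
    rwa [Set.image_prod] at h
  exact closure_minimal (Set.image2_subset subset_closure subset_closure) hcomp.isClosed

/-- If `u` is in the relative interior of `U` (i.e. not in `closure (S3 \ U)`) and
`v ∈ closure V`, then `u*v` is not in `closure (S3 \ mprod U V)`. -/
lemma not_bdry_left (U V : Set H) (hU : U ⊆ S3) (hV : V ⊆ S3) {u v : H}
    (hu1 : ‖u‖ = 1) (hv : v ∈ closure V)
    (hu : u ∉ closure (S3 \ U)) : u * v ∉ closure (S3 \ mprod U V) := by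
  rw [Metric.mem_closure_iff] at hu
  push_neg at hu
  obtain ⟨ε, hε, hball⟩ := hu
  -- pick v' ∈ V with dist v v' < ε/2
  obtain ⟨v', hv'V, hvv'⟩ := Metric.mem_closure_iff.mp hv (ε/2) (by linarith)
  have hv'1 : ‖v'‖ = 1 := hV hv'V
  have hv'ne : v' ≠ 0 := by
    intro h; rw [h, norm_zero] at hv'1; norm_num at hv'1
  intro hcl
  obtain ⟨b, hb, hdb⟩ := Metric.mem_closure_iff.mp hcl (ε/2) (by linarith)
  -- b ∈ S3 \ mprod U V, dist (u*v) b < ε/2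
  set u' : H := b * v'⁻¹ with hu'def
  have hu'1 : ‖u'‖ = 1 := by
    rw [hu'def, norm_mul, norm_inv, hb.1, hv'1]; norm_num
  have hdist : dist u u' < ε := by
    have h1 : u - u' = (u * v' - b) * v'⁻¹ := by
      rw [sub_mul, mul_assoc, mul_inv_cancel₀ hv'ne, mul_one, hu'def]
    have h2 : ‖u * v' - b‖ ≤ ‖u * v' - u * v‖ + ‖u * v - b‖ := by
      have := norm_sub_le_norm_sub_add_norm_sub (u * v') (u * v) b
      linarith [this]
    have h3 : ‖u * v' - u * v‖ = ‖v' - v‖ := by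
      rw [← mul_sub, norm_mul, hu1, one_mul]
    have h4 : ‖v' - v‖ < ε/2 := by
      rw [dist_eq_norm] at hvv'; rwa [norm_sub_rev]
    have h5 : ‖u * v - b‖ < ε/2 := by rwa [dist_eq_norm] at hdb
    calc dist u u' = ‖u - u'‖ := dist_eq_norm _ _
      _ = ‖u * v' - b‖ * ‖v'⁻¹‖ := by rw [h1, norm_mul]
      _ = ‖u * v' - b‖ := by rw [norm_inv, hv'1]; norm_num
      _ < ε := by linarith
  have hu'U : u' ∈ U := by
    by_contra h
    exact absurd hdist (not_lt.mpr (hball u' ⟨hu'1, h⟩))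
  have : b ∈ mprod U V := by
    refine ⟨u', hu'U, v', hv'V, ?_⟩
    show u' * v' = b
    rw [hu'def, mul_assoc, inv_mul_cancel₀ hv'ne, mul_one]
  exact hb.2 this

lemma not_bdry_right (U V : Set H) (hU : U ⊆ S3) (hV : V ⊆ S3) {u v : H}
    (hv1 : ‖v‖ = 1) (hu : u ∈ closure U)
    (hv : v ∉ closure (S3 \ V)) : u * v ∉ closure (S3 \ mprod U V) := by
  rw [Metric.mem_closure_iff] at hv
  push_neg at hv
  obtain ⟨ε, hε, hball⟩ := hv
  obtain ⟨u', hu'U, huu'⟩ := Metric.mem_closure_iff.mp hu (ε/2) (by linarith)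
  have hu'1 : ‖u'‖ = 1 := hU hu'U
  have hu'ne : u' ≠ 0 := by
    intro h; rw [h, norm_zero] at hu'1; norm_num at hu'1
  intro hcl
  obtain ⟨b, hb, hdb⟩ := Metric.mem_closure_iff.mp hcl (ε/2) (by linarith)
  set v' : H := u'⁻¹ * b with hv'def
  have hv'1 : ‖v'‖ = 1 := by
    rw [hv'def, norm_mul, norm_inv, hb.1, hu'1]; norm_num
  have hdist : dist v v' < ε := by
    have h1 : v - v' = u'⁻¹ * (u' * v - b) := by
      rw [mul_sub, ← mul_assoc, inv_mul_cancel₀ hu'ne, one_mul, hv'def]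
    have h2 : ‖u' * v - b‖ ≤ ‖u' * v - u * v‖ + ‖u * v - b‖ :=
      norm_sub_le_norm_sub_add_norm_sub (u' * v) (u * v) b
    have h3 : ‖u' * v - u * v‖ = ‖u' - u‖ := by
      rw [← sub_mul, norm_mul, hv1, mul_one]
    have h4 : ‖u' - u‖ < ε/2 := by
      rw [dist_eq_norm] at huu'; rwa [norm_sub_rev]
    have h5 : ‖u * v - b‖ < ε/2 := by rwa [dist_eq_norm] at hdb
    calc dist v v' = ‖v - v'‖ := dist_eq_norm _ _
      _ = ‖u'⁻¹‖ * ‖u' * v - b‖ := by rw [h1, norm_mul]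
      _ = ‖u' * v - b‖ := by rw [norm_inv, hu'1]; norm_num
      _ < ε := by linarith
  have hv'V : v' ∈ V := by
    by_contra h
    exact absurd hdist (not_lt.mpr (hball v' ⟨hv'1, h⟩))
  have : b ∈ mprod U V := by
    refine ⟨u', hu'U, v', hv'V, ?_⟩
    show u' * v' = b
    rw [hv'def, ← mul_assoc, mul_inv_cancel₀ hu'ne, one_mul]
  exact hb.2 this

theorem stmt17 (U V : Set H) (hU : U ⊆ S3) (hV : V ⊆ S3) :
    bdryIn (mprod U V) ⊆ mprod (bdryIn U) (bdryIn V) := by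
  rintro w ⟨⟨hwS3, hwcl⟩, hwbd⟩
  obtain ⟨u, hu, v, hv, rfl⟩ := closure_mprod U V hU hV hwcl
  have hu1 : ‖u‖ = 1 := closure_minimal hU S3_closed hu
  have hv1 : ‖v‖ = 1 := closure_minimal hV S3_closed hv
  have hubd : u ∈ closure (S3 \ U) := by
    by_contra h
    exact not_bdry_left U V hU hV hu1 hv h hwbd
  have hvbd : v ∈ closure (S3 \ V) := by
    by_contra h
    exact not_bdry_right U V hU hV hv1 hu h hwbd
  exact ⟨u, ⟨⟨hu1, hu⟩, hubd⟩, v, ⟨⟨hv1, hv⟩, hvbd⟩, rfl⟩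
end
end
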